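/- arXiv:1302.6659 — 3 statements merged into one kernel-verified Lean document; each statement's English description precedes it below -/
import Mathlib

section
/- Let α ∈ (0,1) and θ ∈ (0,1). Suppose u : {0,…,n} × [0,1] → [0,1] satisfies: u(n,v) = 1 whenever v ≥ α/2; u(0,v) = 0 whenever v ≤ α/2; and in all other cases (1−v) F_{u(y,v)}(y−1) + v F_{u(y,v)}(y) = α/2. Then Σ_{y=0}^{n} f_θ(y) · Leb({v ∈ [0,1] : u(y,v) < θ}) = α/2, where Leb denotes Lebesgue measure on [0,1]; that is, Stevens' randomized upper endpoint satisfies P_θ(θ > u(Y,V)) = α/2 exactly, for Y Binomial(n,θ) and V uniform on (0,1) independent of Y. -/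
/-!
For fixed `y ≤ n` and `v`, the randomized CDF `t ↦ (1 - v) F_t(y-1) + v F_t(y)` is strictly
decreasing on `[0,1]`, because `d/dt F_t(y) = -n b_{n-1,y}(t)` with `b` a Bernstein polynomial.
Hence, outside the two boundary cases, `u(y,v) < θ` iff `F_θ(y-1) + v f_θ(y) < α/2`, an
interval condition on `v`. Its length times `f_θ(y)` is `T y - T (y+1)` for
`T y = max 0 (α/2 - F_θ(y-1))`, so the sum telescopes to `T 0 - T (n+1) = α/2 - 0`.
-/

open MeasureTheory

/-- The Binomial(n, θ) probability mass function `f_θ(y) = C(n,y) θ^y (1-θ)^(n-y)`. -/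
noncomputable def binomP (n : ℕ) (θ : ℝ) (y : ℕ) : ℝ :=
  (n.choose y : ℝ) * θ ^ y * (1 - θ) ^ (n - y)

/-- `F_θ(y-1) = ∑_{j=0}^{y-1} f_θ(j)`, with the convention `F_θ(-1) = 0`. -/
noncomputable def binomCDFpred (n : ℕ) (θ : ℝ) (y : ℕ) : ℝ :=
  ∑ j ∈ Finset.range y, binomP n θ j

/-- The Binomial(n, θ) cumulative distribution function `F_θ(y) = ∑_{j=0}^{y} f_θ(j)`. -/
noncomputable def binomCDF (n : ℕ) (θ : ℝ) (y : ℕ) : ℝ :=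
  ∑ j ∈ Finset.range (y + 1), binomP n θ j

open Set Polynomial

lemma binomP_eq_eval_bernsteinPolynomial (n : ℕ) (θ : ℝ) (y : ℕ) :
    binomP n θ y = (bernsteinPolynomial ℝ n y).eval θ := by
  simp [binomP, bernsteinPolynomial]

lemma binomCDF_eq_eval (n : ℕ) (θ : ℝ) (y : ℕ) :
    binomCDF n θ y = (∑ j ∈ Finset.range (y + 1), bernsteinPolynomial ℝ n j).eval θ := by
  simp [binomCDF, binomP_eq_eval_bernsteinPolynomial, eval_finsetSum]

lemma binomCDF_eq_binomCDFpred_add (n : ℕ) (θ : ℝ) (y : ℕ) :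
    binomCDF n θ y = binomCDFpred n θ y + binomP n θ y :=
  Finset.sum_range_succ _ _

lemma binomCDFpred_succ (n : ℕ) (θ : ℝ) (y : ℕ) :
    binomCDFpred n θ (y + 1) = binomCDF n θ y :=
  rfl

lemma binomCDF_self (n : ℕ) (θ : ℝ) : binomCDF n θ n = 1 := by
  rw [binomCDF_eq_eval, bernsteinPolynomial.sum, eval_one]

lemma binomP_pos {n y : ℕ} {θ : ℝ} (hy : y ≤ n) (hθ : θ ∈ Ioo 0 1) : 0 < binomP n θ y := by
  have : (0 : ℝ) < n.choose y := by exact_mod_cast Nat.choose_pos hy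
  have : 0 < 1 - θ := sub_pos.mpr hθ.2
  have := hθ.1
  unfold binomP
  positivity

lemma binomCDFpred_nonneg (n y : ℕ) {θ : ℝ} (hθ : θ ∈ Icc 0 1) : 0 ≤ binomCDFpred n θ y := by
  have : 0 ≤ 1 - θ := sub_nonneg.mpr hθ.2
  have := hθ.1
  unfold binomCDFpred binomP
  positivity

lemma derivative_sum_bernsteinPolynomial {R : Type*} [CommRing R] (n y : ℕ) :
    derivative (∑ j ∈ Finset.range (y + 1), bernsteinPolynomial R n j) =
      -n * bernsteinPolynomial R (n - 1) y := by
  induction y with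
  | zero => simp [bernsteinPolynomial.derivative_zero]
  | succ y ih =>
    rw [Finset.sum_range_succ, derivative_add, ih, bernsteinPolynomial.derivative_succ]
    ring

lemma binomCDF_strictAntiOn {n y : ℕ} (hy : y < n) :
    StrictAntiOn (fun t => binomCDF n t y) (Icc 0 1) := by
  simp_rw [binomCDF_eq_eval]
  refine strictAntiOn_of_deriv_neg (convex_Icc 0 1) (Polynomial.continuousOn _) fun t ht => ?_
  rw [interior_Icc] at ht
  have hn : (0 : ℝ) < n := by exact_mod_cast hy.pos
  have hb := binomP_pos (n := n - 1) (y := y) (by omega) ht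
  rw [Polynomial.deriv, derivative_sum_bernsteinPolynomial, eval_mul,
    ← binomP_eq_eval_bernsteinPolynomial]
  simpa using mul_pos hn hb

lemma binomCDF_antitoneOn {n y : ℕ} (hy : y ≤ n) :
    AntitoneOn (fun t => binomCDF n t y) (Icc 0 1) := by
  rcases hy.lt_or_eq with hy | rfl
  · exact (binomCDF_strictAntiOn hy).antitoneOn
  · simp only [binomCDF_self]
    exact antitoneOn_const

noncomputable def randomizedBinomCDF (n y : ℕ) (v θ : ℝ) : ℝ :=
  (1 - v) * binomCDFpred n θ y + v * binomCDF n θ y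

lemma randomizedBinomCDF_eq (n y : ℕ) (v θ : ℝ) :
    randomizedBinomCDF n y v θ = binomCDFpred n θ y + v * binomP n θ y := by
  rw [randomizedBinomCDF, binomCDF_eq_binomCDFpred_add]
  ring

lemma randomizedBinomCDF_strictAntiOn {n y : ℕ} {v : ℝ} (hn : 0 < n) (hy : y ≤ n)
    (hv : v ∈ Icc 0 1) (hy0 : y = 0 → 0 < v) (hyn : y = n → v < 1) :
    StrictAntiOn (randomizedBinomCDF n y v) (Icc 0 1) := by
  intro a ha b hb hab
  obtain _ | m := y
  · have hF := binomCDF_strictAntiOn hn ha hb hab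
    have hv0 := hy0 rfl
    simp only [randomizedBinomCDF, binomCDFpred, Finset.range_zero, Finset.sum_empty]
    nlinarith
  · have hFm := binomCDF_strictAntiOn (n := n) (y := m) (by omega) ha hb hab
    have hFm1 := binomCDF_antitoneOn hy ha hb hab.le
    simp only [randomizedBinomCDF, binomCDFpred_succ]
    rcases hv.2.lt_or_eq with hv1 | rfl
    · nlinarith [mul_pos (sub_pos.mpr hv1) (sub_pos.mpr hFm), mul_nonneg hv.1 (sub_nonneg.mpr hFm1)]
    · have := binomCDF_strictAntiOn (lt_of_le_of_ne hy fun h => (hyn h).false) ha hb hab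
      simpa using this

lemma max_zero_min_eq_sub {b f : ℝ} (hf : 0 ≤ f) : max 0 (min b f) = max 0 b - max 0 (b - f) := by
  grind

lemma volume_Icc_inter_Iio_toReal (c : ℝ) :
    (volume (Icc (0 : ℝ) 1 ∩ Iio c)).toReal = max 0 (min c 1) := by
  rcases le_or_gt c 1 with hc | hc
  · have : Icc (0 : ℝ) 1 ∩ Iio c = Ico 0 c := by
      ext v
      simp only [mem_inter_iff, mem_Icc, mem_Iio, mem_Ico]
      constructor
      · rintro ⟨⟨h0, -⟩, hc'⟩
        exact ⟨h0, hc'⟩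
      · rintro ⟨h0, hc'⟩
        exact ⟨⟨h0, by linarith⟩, hc'⟩
    rw [this, Real.volume_Ico, ENNReal.toReal_ofReal', min_eq_left hc, sub_zero, max_comm]
  · rw [inter_eq_left.mpr fun v hv => hv.2.trans_lt hc, Real.volume_Icc, min_eq_right hc.le]
    simp

lemma mul_volume_add_mul_lt {A f a : ℝ} (hf : 0 < f) :
    f * (volume {v | v ∈ Icc (0 : ℝ) 1 ∧ A + v * f < a}).toReal =
      max 0 (a - A) - max 0 (a - (A + f)) := by
  have hset : {v | v ∈ Icc (0 : ℝ) 1 ∧ A + v * f < a} = Icc 0 1 ∩ Iio ((a - A) / f) := by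
    ext v
    simp only [mem_ofPred_eq, mem_inter_iff, mem_Iio, lt_div_iff₀ hf]
    exact and_congr_right fun _ => by constructor <;> intro h <;> linarith
  rw [hset, volume_Icc_inter_Iio_toReal, mul_max_of_nonneg _ _ hf.le,
    mul_min_of_nonneg _ _ hf.le, mul_div_cancel₀ _ hf.ne', mul_zero, mul_one,
    max_zero_min_eq_sub hf.le, sub_sub]

lemma lt_iff_randomizedBinomCDF_lt {n y : ℕ} {a θ v t : ℝ} (hn : 0 < n) (ha : a ∈ Ioo 0 1)
    (hθ : θ ∈ Ioo 0 1) (hy : y ≤ n) (hv : v ∈ Icc 0 1) (ht : t ∈ Icc 0 1)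
    (ht1 : y = n → a ≤ v → t = 1) (ht0 : y = 0 → v ≤ a → t = 0)
    (hH : ¬(y = n ∧ a ≤ v) → ¬(y = 0 ∧ v ≤ a) → randomizedBinomCDF n y v t = a) :
    t < θ ↔ randomizedBinomCDF n y v θ < a := by
  have hθI : θ ∈ Icc 0 1 := Ioo_subset_Icc_self hθ
  by_cases hyn : y = n ∧ a ≤ v
  · obtain ⟨rfl, hav⟩ := hyn
    refine iff_of_false (by rw [ht1 rfl hav]; exact hθ.2.not_gt) fun hlt => ?_
    have hpred := binomCDFpred_nonneg y y hθI
    have hsum := binomCDF_self y θ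
    rw [binomCDF_eq_binomCDFpred_add, ← eq_sub_iff_add_eq'] at hsum
    rw [randomizedBinomCDF_eq, hsum] at hlt
    nlinarith [mul_nonneg (sub_nonneg.mpr hv.2) hpred]
  by_cases hy0 : y = 0 ∧ v ≤ a
  · obtain ⟨rfl, hva⟩ := hy0
    refine iff_of_true (by rw [ht0 rfl hva]; exact hθ.1) ?_
    have hP : binomP n θ 0 < 1 := by
      simpa [binomP] using pow_lt_one₀ (sub_nonneg.mpr hθ.2.le) (sub_lt_self 1 hθ.1) hn.ne'
    rw [randomizedBinomCDF_eq]
    simp only [binomCDFpred, Finset.range_zero, Finset.sum_empty, zero_add]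
    nlinarith [mul_pos ha.1 (sub_pos.mpr hP),
      mul_nonneg (binomP_pos (Nat.zero_le n) hθ).le (sub_nonneg.mpr hva)]
  rw [← hH hyn hy0]
  refine ((randomizedBinomCDF_strictAntiOn hn hy hv ?_ ?_).lt_iff_gt hθI ht).symm
  · intro h
    exact ha.1.trans (lt_of_not_ge fun hva => hy0 ⟨h, hva⟩)
  · intro h
    exact (lt_of_not_ge fun hav => hyn ⟨h, hav⟩).trans ha.2

/-- Stevens' randomized upper endpoint `u(y,v)` — equal to `1` for `y = n, v ≥ α/2`, to `0`
for `y = 0, v ≤ α/2`, and otherwise solving `(1-v) F_θ(y-1) + v F_θ(y) = α/2` — satisfies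
`P_θ(θ > u(Y,V)) = α/2` exactly, for `Y ~ Binomial(n,θ)` and `V ~ U(0,1)` independent. -/
theorem stmt_6 (n : ℕ) (hn : 1 ≤ n) (α : ℝ) (hα : α ∈ Set.Ioo (0 : ℝ) 1)
    (θ : ℝ) (hθ : θ ∈ Set.Ioo (0 : ℝ) 1)
    (u : ℕ → ℝ → ℝ)
    (hu01 : ∀ y ≤ n, ∀ v ∈ Set.Icc (0 : ℝ) 1, u y v ∈ Set.Icc (0 : ℝ) 1)
    (hun : ∀ v ∈ Set.Icc (0 : ℝ) 1, α / 2 ≤ v → u n v = 1)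
    (hu0 : ∀ v ∈ Set.Icc (0 : ℝ) 1, v ≤ α / 2 → u 0 v = 0)
    (hu : ∀ y ≤ n, ∀ v ∈ Set.Icc (0 : ℝ) 1, ¬(y = n ∧ α / 2 ≤ v) → ¬(y = 0 ∧ v ≤ α / 2) →
      (1 - v) * binomCDFpred n (u y v) y + v * binomCDF n (u y v) y = α / 2) :
    ∑ y ∈ Finset.range (n + 1),
      binomP n θ y *
        (volume {v : ℝ | v ∈ Set.Icc (0 : ℝ) 1 ∧ u y v < θ}).toReal = α / 2 := by
  have ha : α / 2 ∈ Ioo (0 : ℝ) 1 := ⟨by linarith [hα.1], by linarith [hα.2]⟩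
  set T : ℕ → ℝ := fun y => max 0 (α / 2 - binomCDFpred n θ y) with hT
  have hsummand : ∀ y ∈ Finset.range (n + 1),
      binomP n θ y * (volume {v : ℝ | v ∈ Icc (0 : ℝ) 1 ∧ u y v < θ}).toReal = T y - T (y + 1) := by
    intro y hyr
    have hy : y ≤ n := Nat.lt_succ_iff.mp (Finset.mem_range.mp hyr)
    have hset : {v : ℝ | v ∈ Icc (0 : ℝ) 1 ∧ u y v < θ} =
        {v | v ∈ Icc (0 : ℝ) 1 ∧ binomCDFpred n θ y + v * binomP n θ y < α / 2} := by
      ext v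
      simp only [mem_ofPred_eq, ← randomizedBinomCDF_eq]
      refine and_congr_right fun hv => lt_iff_randomizedBinomCDF_lt hn ha hθ hy hv (hu01 y hy v hv)
        (fun h => ?_) (fun h => ?_) (hu y hy v hv)
      · subst h; exact hun v hv
      · subst h; exact hu0 v hv
    rw [hset, mul_volume_add_mul_lt (binomP_pos hy hθ)]
    simp only [hT, binomCDFpred_succ, binomCDF_eq_binomCDFpred_add]
  rw [Finset.sum_congr rfl hsummand, Finset.sum_range_sub']
  simp only [hT, binomCDFpred_succ, binomCDF_self]
  rw [binomCDFpred, Finset.sum_range_zero, sub_zero, max_eq_right ha.1.le,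
    max_eq_left (sub_nonpos.mpr ha.2.le), sub_zero]
end

section
/- Let y be an integer with 0 ≤ y ≤ n, let v ∈ [0,1], and let α ∈ (0,1). If θ_u, θ_ℓ ∈ (0,1) satisfy (1−v) F_{θ_u}(y−1) + v F_{θ_u}(y) = α/2 and (1−v)(1 − F_{θ_ℓ}(y−1)) + v (1 − F_{θ_ℓ}(y)) = α/2, then θ_ℓ < θ_u. (The randomized confidence interval [ℓ_R(y,v), u_R(y,v)] is a nondegenerate interval.) -/
/-! The Binomial CDF `θ ↦ F_θ(k)` is nonincreasing on `[0,1]`: it is a sum of Bernstein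
polynomials whose derivative telescopes to `-n b_{n-1,k}`. So if `θ_u ≤ θ_ℓ`, adding the two
defining equations gives `α ≥ 1`. -/

open Polynomial Finset

theorem derivative_sum_range_succ_bernsteinPolynomial (R : Type*) [CommRing R] (n k : ℕ) :
    derivative (∑ j ∈ range (k + 1), bernsteinPolynomial R n j) =
      -(n : R[X]) * bernsteinPolynomial R (n - 1) k := by
  induction k with
  | zero => simp [bernsteinPolynomial.derivative_zero]
  | succ k ih =>
    rw [sum_range_succ, derivative_add, ih, bernsteinPolynomial.derivative_succ]
    ring

theorem bernsteinPolynomial_eval_nonneg (n ν : ℕ) {x : ℝ} (hx : x ∈ Set.Icc 0 1) :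
    0 ≤ (bernsteinPolynomial ℝ n ν).eval x := by
  obtain ⟨hx0, hx1⟩ := hx
  have h1x : 0 ≤ 1 - x := sub_nonneg.2 hx1
  simp only [bernsteinPolynomial, eval_mul, eval_pow, eval_sub, eval_one, eval_X, eval_natCast]
  positivity

theorem binomCDFpred_eq_eval (n : ℕ) (θ : ℝ) (k : ℕ) :
    binomCDFpred n θ k = (∑ j ∈ range k, bernsteinPolynomial ℝ n j).eval θ := by
  simp [binomCDFpred, binomP, bernsteinPolynomial, eval_finsetSum]

theorem binomCDFpred_antitoneOn (n k : ℕ) :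
    AntitoneOn (fun θ => binomCDFpred n θ k) (Set.Icc 0 1) := by
  simp only [binomCDFpred_eq_eval]
  set p := ∑ j ∈ range k, bernsteinPolynomial ℝ n j
  refine antitoneOn_of_deriv_nonpos (convex_Icc 0 1) p.continuousOn p.differentiableOn ?_
  intro θ hθ
  rw [interior_Icc] at hθ
  rw [Polynomial.deriv]
  cases k with
  | zero => simp [p]
  | succ k =>
    rw [derivative_sum_range_succ_bernsteinPolynomial, eval_mul, eval_neg, eval_natCast, neg_mul]
    exact neg_nonpos.2 (mul_nonneg n.cast_nonneg
      (bernsteinPolynomial_eval_nonneg _ _ (Set.Ioo_subset_Icc_self hθ)))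

theorem stmt_12_general (n : ℕ) (y : ℕ)
    (v : ℝ) (hv : v ∈ Set.Icc (0 : ℝ) 1) (α : ℝ) (hα : α ∈ Set.Ioo (0 : ℝ) 1)
    (θu θl : ℝ) (hθu : θu ∈ Set.Ioo (0 : ℝ) 1) (hθl : θl ∈ Set.Ioo (0 : ℝ) 1)
    (hu : (1 - v) * binomCDFpred n θu y + v * binomCDF n θu y = α / 2)
    (hl : (1 - v) * (1 - binomCDFpred n θl y) + v * (1 - binomCDF n θl y) = α / 2) :
    θl < θu := by
  by_contra! hle
  have hθu' := Set.Ioo_subset_Icc_self hθu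
  have hθl' := Set.Ioo_subset_Icc_self hθl
  have hpred := binomCDFpred_antitoneOn n y hθu' hθl' hle
  have hcdf : binomCDF n θl y ≤ binomCDF n θu y :=
    binomCDFpred_antitoneOn n (y + 1) hθu' hθl' hle
  linarith [mul_le_mul_of_nonneg_left hpred (sub_nonneg.2 hv.2),
    mul_le_mul_of_nonneg_left hcdf hv.1, hα.2]

/-- For `0 ≤ y ≤ n`, `v ∈ [0,1]`, `α ∈ (0,1)`: if `θ_u, θ_ℓ ∈ (0,1)` satisfy
`(1-v) F_{θ_u}(y-1) + v F_{θ_u}(y) = α/2` and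
`(1-v)(1 - F_{θ_ℓ}(y-1)) + v(1 - F_{θ_ℓ}(y)) = α/2`, then `θ_ℓ < θ_u`
(the randomized confidence interval `[ℓ_R(y,v), u_R(y,v)]` is nondegenerate). -/
theorem stmt_12 (n : ℕ) (hn : 1 ≤ n) (y : ℕ) (hy : y ≤ n)
    (v : ℝ) (hv : v ∈ Set.Icc (0 : ℝ) 1) (α : ℝ) (hα : α ∈ Set.Ioo (0 : ℝ) 1)
    (θu θl : ℝ) (hθu : θu ∈ Set.Ioo (0 : ℝ) 1) (hθl : θl ∈ Set.Ioo (0 : ℝ) 1)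
    (hu : (1 - v) * binomCDFpred n θu y + v * binomCDF n θu y = α / 2)
    (hl : (1 - v) * (1 - binomCDFpred n θl y) + v * (1 - binomCDF n θl y) = α / 2) :
    θl < θu :=
  stmt_12_general n y v hv α hα θu θl hθu hθl hu hl
end

section
/- Let θ ∈ (0,1), α ∈ (0,1), and let Y₁, Y₂, … be independent and identically Binomial(n,θ) distributed random variables on a probability space. Let v₁, v₂, … be a deterministic sequence in [0,1] that is uniformly distributed modulo 1, i.e., for every a ∈ [0,1], (1/m) Σ_{k=1}^{m} 𝟙[v_k ≤ a] → a as m → ∞. Then, almost surely, (1/m) Σ_{k=1}^{m} 𝟙[v_k·f_θ(Y_k) + F_θ(Y_k − 1) ≤ α/2] → α/2 as m → ∞. (The long-run proportion of randomized upper confidence limits computed with the auxiliary deterministic sequence that fail to cover θ converges to α/2.) -/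
open MeasureTheory ProbabilityTheory Filter

/-!
Let `t` be where the binomial CDF crosses `α/2`, i.e. `F(t-1) ≤ α/2 < F(t)`, and
`a = (α/2 - F(t-1)) / f(t) ∈ [0,1]`. For `u ∈ [0,1]`, `u f(y) + F(y-1) ≤ α/2` holds exactly when
`y < r(u)` with `r(u) = t + 𝟙[u ≤ a]`. So the k-th indicator is `𝟙[Y_k < r(v_k)]`; these are
pairwise independent with means `F(t-1) + 𝟙[v_k ≤ a] f(t)`, whose Cesàro means tend to
`F(t-1) + a f(t) = α/2` because `v` is equidistributed. A strong law for pairwise independent,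
nonnegative variables of bounded variance (Chebyshev and Borel–Cantelli along the squares, then
monotone interpolation between squares) finishes the proof.
-/

open Finset Topology

lemma tendsto_div_of_monotone_of_tendsto_div_sq {u : ℕ → ℝ} {l : ℝ} (hu : Monotone u)
    (h : Tendsto (fun m : ℕ => u ((m + 1) ^ 2) / ((m + 1) ^ 2 : ℕ)) atTop (𝓝 l)) :
    Tendsto (fun m : ℕ => u m / m) atTop (𝓝 l) := by
  refine tendsto_div_of_monotone_of_exists_subseq_tendsto_div u l hu fun b hb =>
    ⟨fun m => (m + 1) ^ 2, ?_, (tendsto_pow_atTop two_ne_zero).comp (tendsto_add_atTop_nat 1), h⟩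
  have hratio : Tendsto (fun m : ℕ => (1 + 1 / ((m : ℝ) + 1)) ^ 2) atTop (𝓝 1) := by
    simpa using (tendsto_one_div_add_atTop_nhds_zero_nat.const_add (1 : ℝ)).pow 2
  filter_upwards [hratio.eventually_lt_const hb] with m hm
  calc (((m + 1 + 1) ^ 2 : ℕ) : ℝ) = (1 + 1 / ((m : ℝ) + 1)) ^ 2 * ((m + 1) ^ 2 : ℕ) := by
        push_cast; field_simp
    _ ≤ b * ((m + 1) ^ 2 : ℕ) := by gcongr

lemma measureReal_preimage_Iio_eq_sum {Ω : Type*} [MeasurableSpace Ω] {P : Measure Ω}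
    {Y : Ω → ℕ} (hY : Measurable Y) {p : ℕ → ℝ} (hp : ∀ y, 0 ≤ p y)
    (hdist : ∀ y, P {ω | Y ω = y} = ENNReal.ofReal (p y)) (t : ℕ) :
    P.real (Y ⁻¹' Set.Iio t) = ∑ j ∈ range t, p j := by
  rw [← coe_range, measureReal_def,
    ← sum_measure_preimage_singleton _ fun y _ => hY (measurableSet_singleton y)]
  simp only [Set.preimage, Set.mem_singleton_iff, hdist]
  rw [← ENNReal.ofReal_sum_of_nonneg fun j _ => hp j,
    ENNReal.toReal_ofReal (sum_nonneg fun j _ => hp j)]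

section StrongLaw

variable {Ω : Type*} [MeasurableSpace Ω] {P : Measure Ω} [IsProbabilityMeasure P]
  {X : ℕ → Ω → ℝ}

lemma ae_eventually_abs_sum_sub_lt (hX : ∀ k, MemLp (X k) 2 P)
    (hindep : Pairwise fun i j => IndepFun (X i) (X j) P) {C : ℝ}
    (hvar : ∀ k, variance (X k) P ≤ C) {ε : ℝ} (hε : 0 < ε) :
    ∀ᵐ ω ∂P, ∀ᶠ m in atTop,
      |∑ k ∈ range ((m + 1) ^ 2), X k ω - ∑ k ∈ range ((m + 1) ^ 2), P[X k]|
        < ε * ((m + 1) ^ 2 : ℕ) := by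
  set S : ℕ → Ω → ℝ := fun N => ∑ k ∈ range N, X k
  have hC : 0 ≤ C := (variance_nonneg _ _).trans (hvar 0)
  have hSmean : ∀ N, P[S N] = ∑ k ∈ range N, P[X k] := fun N => by
    simp only [S, Finset.sum_apply]
    exact integral_finsetSum _ fun k _ => (hX k).integrable one_le_two
  have hSvar : ∀ N, variance (S N) P ≤ N * C := fun N => by
    rw [IndepFun.variance_sum (fun k _ => hX k) fun i _ j _ hij => hindep hij]
    simpa using sum_le_sum fun k (_ : k ∈ range N) => hvar k
  have hbound : ∀ m : ℕ,
      P {ω | ε * ((m + 1) ^ 2 : ℕ) ≤ |S ((m + 1) ^ 2) ω - P[S ((m + 1) ^ 2)]|}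
        ≤ ENNReal.ofReal (C / ε ^ 2 * (1 / ((m + 1 : ℕ) : ℝ) ^ 2)) := fun m => by
    refine (meas_ge_le_variance_div_sq (memLp_finsetSum' _ fun k _ => hX k) (by positivity)).trans
      (ENNReal.ofReal_le_ofReal ?_)
    calc variance (S ((m + 1) ^ 2)) P / (ε * ((m + 1) ^ 2 : ℕ)) ^ 2
        ≤ ((m + 1) ^ 2 : ℕ) * C / (ε * ((m + 1) ^ 2 : ℕ)) ^ 2 := by gcongr; exact hSvar _
      _ = C / ε ^ 2 * (1 / ((m + 1 : ℕ) : ℝ) ^ 2) := by push_cast; field_simp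
  have hsum : Summable fun m : ℕ => C / ε ^ 2 * (1 / ((m + 1 : ℕ) : ℝ) ^ 2) :=
    ((summable_nat_add_iff 1).2 (Real.summable_one_div_nat_pow.2 one_lt_two)).mul_left _
  have htsum := ne_top_of_le_ne_top (by
    rw [← ENNReal.ofReal_tsum_of_nonneg (fun m => by positivity) hsum]
    exact ENNReal.ofReal_ne_top) (ENNReal.tsum_le_tsum hbound)
  filter_upwards [ae_eventually_notMem htsum] with ω hω
  filter_upwards [hω] with m hm
  rw [hSmean] at hm
  simpa [S, Finset.sum_apply] using hm

lemma ae_tendsto_sum_sub_div_sq (hX : ∀ k, MemLp (X k) 2 P)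
    (hindep : Pairwise fun i j => IndepFun (X i) (X j) P) {C : ℝ}
    (hvar : ∀ k, variance (X k) P ≤ C) :
    ∀ᵐ ω ∂P, Tendsto (fun m : ℕ =>
      (∑ k ∈ range ((m + 1) ^ 2), X k ω - ∑ k ∈ range ((m + 1) ^ 2), P[X k]) / ((m + 1) ^ 2 : ℕ))
      atTop (𝓝 0) := by
  filter_upwards [ae_all_iff.2 fun j : ℕ =>
    ae_eventually_abs_sum_sub_lt hX hindep hvar (Nat.one_div_pos_of_nat (n := j))] with ω hω
  refine Metric.tendsto_nhds.2 fun δ hδ => ?_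
  obtain ⟨j, hj⟩ := exists_nat_one_div_lt hδ
  filter_upwards [hω j] with m hm
  rw [Real.dist_eq, sub_zero, abs_div, Nat.abs_cast, div_lt_iff₀ (by positivity)]
  exact hm.trans (by gcongr)

theorem ae_tendsto_sum_div_of_pairwise_indep (hX0 : ∀ k ω, 0 ≤ X k ω)
    (hX : ∀ k, MemLp (X k) 2 P) (hindep : Pairwise fun i j => IndepFun (X i) (X j) P) {C : ℝ}
    (hvar : ∀ k, variance (X k) P ≤ C) {L : ℝ}
    (hmean : Tendsto (fun m : ℕ => (∑ k ∈ range m, P[X k]) / (m : ℝ)) atTop (𝓝 L)) :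
    ∀ᵐ ω ∂P, Tendsto (fun m : ℕ => (∑ k ∈ range m, X k ω) / m) atTop (𝓝 L) := by
  filter_upwards [ae_tendsto_sum_sub_div_sq hX hindep hvar] with ω hω
  refine tendsto_div_of_monotone_of_tendsto_div_sq
    (monotone_nat_of_le_succ fun m => ?_) ?_
  · rw [sum_range_succ]; exact le_add_of_nonneg_right (hX0 m ω)
  · have := hω.add (hmean.comp ((tendsto_pow_atTop two_ne_zero).comp (tendsto_add_atTop_nat 1)))
    rw [zero_add] at this
    exact this.congr fun m => by simp only [Function.comp_apply, ← add_div, sub_add_cancel]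

theorem ae_tendsto_sum_div_of_mem_Icc (hXm : ∀ k, AEMeasurable (X k) P)
    (hX01 : ∀ k ω, X k ω ∈ Set.Icc (0 : ℝ) 1)
    (hindep : Pairwise fun i j => IndepFun (X i) (X j) P) {L : ℝ}
    (hmean : Tendsto (fun m : ℕ => (∑ k ∈ range m, P[X k]) / (m : ℝ)) atTop (𝓝 L)) :
    ∀ᵐ ω ∂P, Tendsto (fun m : ℕ => (∑ k ∈ range m, X k ω) / m) atTop (𝓝 L) :=
  ae_tendsto_sum_div_of_pairwise_indep (fun k ω => (hX01 k ω).1)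
    (fun k => MemLp.of_bound (hXm k).aestronglyMeasurable 1 (ae_of_all _ fun ω => by
      rw [Real.norm_of_nonneg (hX01 k ω).1]; exact (hX01 k ω).2))
    hindep (fun k => variance_le_sq_of_bounded (ae_of_all _ (hX01 k)) (hXm k)) hmean

lemma ae_tendsto_sum_ite_lt_div {Y : ℕ → Ω → ℕ} (hY : ∀ k, Measurable (Y k))
    (hindep : Pairwise fun i j => IndepFun (Y i) (Y j) P) {p : ℕ → ℝ} (hp : ∀ y, 0 ≤ p y)
    (hdist : ∀ k y, P {ω | Y k ω = y} = ENNReal.ofReal (p y)) (r : ℕ → ℕ) {L : ℝ}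
    (hL : Tendsto (fun m : ℕ => (∑ k ∈ range m, ∑ j ∈ range (r k), p j) / (m : ℝ)) atTop (𝓝 L)) :
    ∀ᵐ ω ∂P, Tendsto (fun m : ℕ =>
      (∑ k ∈ range m, if Y k ω < r k then (1 : ℝ) else 0) / m) atTop (𝓝 L) := by
  set X : ℕ → Ω → ℝ := fun k => (fun y => if y < r k then (1 : ℝ) else 0) ∘ Y k
  have hmean : ∀ k, P[X k] = ∑ j ∈ range (r k), p j := fun k => by
    have hX : X k = (Y k ⁻¹' Set.Iio (r k)).indicator 1 := by
      ext ω
      simp [X, Set.indicator]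
    rw [hX, integral_indicator_one (hY k measurableSet_Iio),
      measureReal_preimage_Iio_eq_sum (hY k) hp (hdist k)]
  exact ae_tendsto_sum_div_of_mem_Icc (X := X)
    (fun k => (measurable_from_nat.comp (hY k)).aemeasurable)
    (fun k ω => by simp only [X, Function.comp_apply]; split_ifs <;> simp)
    (fun i j hij => (hindep hij).comp measurable_from_nat measurable_from_nat)
    (by simpa only [hmean] using hL)

end StrongLaw

lemma exists_le_and_lt_add_one {α : Type*} [LinearOrder α] {G : ℕ → α} {s : α} {N : ℕ}
    (h0 : G 0 ≤ s) (hN : s < G N) : ∃ t, G t ≤ s ∧ s < G (t + 1) := by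
  induction N with
  | zero => exact absurd hN h0.not_gt
  | succ N ih =>
    by_cases h : s < G N
    · exact ih h
    · exact ⟨N, not_lt.1 h, hN⟩

lemma mul_add_sum_range_le_iff {p : ℕ → ℝ} (hp : ∀ y, 0 ≤ p y) {s : ℝ} {t : ℕ}
    (ht : ∑ j ∈ range t, p j ≤ s) (ht' : s < ∑ j ∈ range (t + 1), p j) {u : ℝ}
    (hu : u ∈ Set.Icc (0 : ℝ) 1) (y : ℕ) :
    u * p y + ∑ j ∈ range y, p j ≤ s ↔ y < t ∨ y = t ∧ u ≤ (s - ∑ j ∈ range t, p j) / p t := by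
  have hmono : ∀ {i j}, i ≤ j → ∑ l ∈ range i, p l ≤ ∑ l ∈ range j, p l := fun hij =>
    sum_le_sum_of_subset_of_nonneg (range_subset_range.2 hij) fun l _ _ => hp l
  rcases lt_trichotomy y t with hy | rfl | hy
  · have := hmono (Nat.succ_le_of_lt hy)
    rw [sum_range_succ] at this
    simp only [hy, true_or, iff_true]
    nlinarith [hu.2, hp y]
  · rw [sum_range_succ] at ht'
    simp only [lt_irrefl, true_and, false_or]
    rw [le_div_iff₀ (by linarith)]
    constructor <;> intro <;> linarith
  · have := hmono (Nat.succ_le_of_lt hy)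
    simp only [hy.not_gt, hy.ne', false_or, false_and, iff_false, not_le]
    nlinarith [mul_nonneg hu.1 (hp y)]

lemma exists_randomized_cutoff {p : ℕ → ℝ} (hp : ∀ y, 0 ≤ p y) {s : ℝ} (hs : 0 ≤ s) {N : ℕ}
    (hN : s < ∑ j ∈ range N, p j) :
    ∃ t : ℕ, ∃ a ∈ Set.Icc (0 : ℝ) 1, ∑ j ∈ range t, p j + p t * a = s ∧
      ∀ u ∈ Set.Icc (0 : ℝ) 1, ∀ y,
        u * p y + ∑ j ∈ range y, p j ≤ s ↔ y < if u ≤ a then t + 1 else t := by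
  obtain ⟨t, ht, ht'⟩ := exists_le_and_lt_add_one (G := fun y => ∑ j ∈ range y, p j)
    (by simpa using hs) hN
  have hlt : s < ∑ j ∈ range t, p j + p t := sum_range_succ p t ▸ ht'
  have hpt : 0 < p t := by linarith
  refine ⟨t, (s - ∑ j ∈ range t, p j) / p t, ⟨by positivity, (div_le_one₀ hpt).2 (by linarith)⟩,
    ?_, fun u hu y => ?_⟩
  · rw [mul_div_cancel₀ _ hpt.ne', add_sub_cancel]
  · rw [mul_add_sum_range_le_iff hp ht ht' hu]
    split_ifs with h
    · simp only [h, and_true]; omega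
    · simp only [h, and_false, or_false]

lemma tendsto_sum_range_const_add_mul_div {c : ℕ → ℝ} {a : ℝ}
    (h : Tendsto (fun m : ℕ => (∑ k ∈ range m, c k) / (m : ℝ)) atTop (𝓝 a)) (A B : ℝ) :
    Tendsto (fun m : ℕ => (∑ k ∈ range m, (A + B * c k)) / (m : ℝ)) atTop (𝓝 (A + B * a)) := by
  refine ((h.const_mul B).const_add A).congr' ?_
  filter_upwards [eventually_ne_atTop 0] with m hm
  simp only [sum_add_distrib, sum_const, card_range, nsmul_eq_mul, ← mul_sum]
  field_simp

lemma binomP_nonneg {n : ℕ} {θ : ℝ} (hθ : θ ∈ Set.Icc (0 : ℝ) 1) (y : ℕ) :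
    0 ≤ binomP n θ y := by
  have := hθ.1
  have := sub_nonneg.2 hθ.2
  unfold binomP
  positivity

lemma binomCDFpred_succ_self (n : ℕ) (θ : ℝ) : binomCDFpred n θ (n + 1) = 1 := by
  have h := (add_pow θ (1 - θ) n).symm
  rw [add_sub_cancel, one_pow] at h
  rw [← h]
  exact sum_congr rfl fun y _ => by rw [binomP]; ring

theorem stmt_17_general (n : ℕ) (θ α : ℝ) (hθ : θ ∈ Set.Ioo (0 : ℝ) 1)
    (hα : α ∈ Set.Ioo (0 : ℝ) 1)
    {Ω : Type*} [MeasurableSpace Ω] (P : Measure Ω) [IsProbabilityMeasure P]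
    (Y : ℕ → Ω → ℕ)
    (hmeas : ∀ k, Measurable (Y k))
    (hindep : iIndepFun Y P)
    (hdist : ∀ k, ∀ y : ℕ, P {ω | Y k ω = y} = ENNReal.ofReal (binomP n θ y))
    (v : ℕ → ℝ) (hv : ∀ k, v k ∈ Set.Icc (0 : ℝ) 1)
    (hud : ∀ a ∈ Set.Icc (0 : ℝ) 1,
      Tendsto
        (fun m : ℕ => (1 / m : ℝ) * ∑ k ∈ Finset.range m,
          (if v k ≤ a then (1 : ℝ) else 0))
        atTop (nhds a)) :
    ∀ᵐ ω ∂P,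
      Tendsto
        (fun m : ℕ => (1 / m : ℝ) * ∑ k ∈ Finset.range m,
          (if v k * binomP n θ (Y k ω) + binomCDFpred n θ (Y k ω) ≤ α / 2
            then (1 : ℝ) else 0))
        atTop (nhds (α / 2)) := by
  have hf : ∀ y, 0 ≤ binomP n θ y := binomP_nonneg (Set.Ioo_subset_Icc_self hθ)
  obtain ⟨t, a, ha, hmean, hcutoff⟩ := exists_randomized_cutoff hf (half_pos hα.1).le (N := n + 1)
    (by rw [← binomCDFpred, binomCDFpred_succ_self]; linarith [hα.2])
  set r : ℕ → ℕ := fun k => if v k ≤ a then t + 1 else t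
  have hcesaro : Tendsto (fun m : ℕ => (∑ k ∈ range m, binomCDFpred n θ (r k)) / (m : ℝ)) atTop
      (𝓝 (α / 2)) := by
    have hr : ∀ k, binomCDFpred n θ (r k) =
        binomCDFpred n θ t + binomP n θ t * if v k ≤ a then 1 else 0 := fun k => by
      by_cases h : v k ≤ a
      · simp only [r, h, if_true, mul_one]; exact sum_range_succ _ _
      · simp only [r, h, if_false, mul_zero, add_zero]
    have hlim : binomCDFpred n θ t + binomP n θ t * a = α / 2 := hmean
    simp_rw [one_div_mul_eq_div] at hud
    simpa only [hr, hlim] using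
      tendsto_sum_range_const_add_mul_div (hud a ha) (binomCDFpred n θ t) (binomP n θ t)
  filter_upwards [ae_tendsto_sum_ite_lt_div hmeas (fun i j hij => hindep.indepFun hij) hf hdist r
    hcesaro] with ω hω
  simp only [one_div_mul_eq_div]
  convert hω using 5 with m k
  exact hcutoff (v k) (hv k) (Y k ω)

/-- If `Y₁, Y₂, …` are iid Binomial(n,θ) and `v₁, v₂, …` is a deterministic sequence in
`[0,1]` that is uniformly distributed modulo 1, then almost surely the long-run proportion
of indices `k` with `v_k f_θ(Y_k) + F_θ(Y_k - 1) ≤ α/2` (i.e. of randomized upper limits,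
computed with the auxiliary deterministic sequence, failing to cover `θ`) converges to
`α/2`. -/
theorem stmt_17 (n : ℕ) (hn : 1 ≤ n) (θ α : ℝ) (hθ : θ ∈ Set.Ioo (0 : ℝ) 1)
    (hα : α ∈ Set.Ioo (0 : ℝ) 1)
    {Ω : Type*} [MeasurableSpace Ω] (P : Measure Ω) [IsProbabilityMeasure P]
    (Y : ℕ → Ω → ℕ)
    (hmeas : ∀ k, Measurable (Y k))
    (hindep : iIndepFun Y P)
    (hdist : ∀ k, ∀ y : ℕ, P {ω | Y k ω = y} = ENNReal.ofReal (binomP n θ y))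
    (v : ℕ → ℝ) (hv : ∀ k, v k ∈ Set.Icc (0 : ℝ) 1)
    (hud : ∀ a ∈ Set.Icc (0 : ℝ) 1,
      Tendsto
        (fun m : ℕ => (1 / m : ℝ) * ∑ k ∈ Finset.range m,
          (if v k ≤ a then (1 : ℝ) else 0))
        atTop (nhds a)) :
    ∀ᵐ ω ∂P,
      Tendsto
        (fun m : ℕ => (1 / m : ℝ) * ∑ k ∈ Finset.range m,
          (if v k * binomP n θ (Y k ω) + binomCDFpred n θ (Y k ω) ≤ α / 2
            then (1 : ℝ) else 0))
        atTop (nhds (α / 2)) :=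
  stmt_17_general n θ α hθ hα P Y hmeas hindep hdist v hv hud
end
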